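/- Let D be a set, m n : ℕ, f₁ : (Fin m → D) → D, f₂ : (Fin n → D) → D, and op : D → D → D. For all A : Fin m → Set D and B : Fin n → Set D, the image of the function x ↦ op (f₁ (x ∘ Fin.castAdd n)) (f₂ (x ∘ Fin.natAdd m)) over the box determined by Fin.append A B : Fin (m+n) → Set D equals Set.image2 op (the image of f₁ over the box of A) (the image of f₂ over the box of B). In other words, when the two subexpressions share no variables, composing the canonical set extensions of op, f₁, and f₂ yields exactly the canonical set extension of the composed function. -/
import Mathlib


/-- when the two subexpressions share no variables, the image of the
composed function over the box of `Fin.append A B` equals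
`Set.image2 op` of the images of `f₁` and `f₂` over the boxes of `A` and `B`. -/
theorem stmt_3 {D : Type*} (m n : ℕ)
    (f₁ : (Fin m → D) → D) (f₂ : (Fin n → D) → D) (op : D → D → D) :
    ∀ (A : Fin m → Set D) (B : Fin n → Set D),
      (fun x : Fin (m + n) → D =>
          op (f₁ (x ∘ Fin.castAdd n)) (f₂ (x ∘ Fin.natAdd m))) ''
        {x | ∀ i, x i ∈ Fin.append A B i} =
      Set.image2 op (f₁ '' {x | ∀ i, x i ∈ A i}) (f₂ '' {y | ∀ i, y i ∈ B i}) := by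
  intro A B
  ext d
  constructor
  · rintro ⟨x, hx, rfl⟩
    exact ⟨f₁ (x ∘ Fin.castAdd n), ⟨_, fun i => by simpa using hx (Fin.castAdd n i), rfl⟩,
      f₂ (x ∘ Fin.natAdd m), ⟨_, fun i => by simpa using hx (Fin.natAdd m i), rfl⟩, rfl⟩
  · rintro ⟨a, ⟨xa, hxa, rfl⟩, b, ⟨xb, hxb, rfl⟩, rfl⟩
    refine ⟨Fin.append xa xb, fun i => ?_, ?_⟩
    · induction i using Fin.addCases with
      | left i => simpa using hxa i
      | right i => simpa using hxb i
    · simp [Function.comp_def]
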